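/- arXiv:1609.08885 — 5 statements merged into one kernel-verified Lean document; each statement's English description precedes it below -/
import Mathlib

section
/- Let n ≥ 3 be an integer, and let g₁, g₂, g be integers with 0 ≤ g₁, g₂ ≤ n-2 and 0 ≤ g ≤ n-3. If g₁ + g₂ + 2 > g + 1, then f_{n-1}(g₁) + f_{n-1}(g₂) ≥ f_n(g) + 1. -/
def fval (n g : ℤ) : ℤ := n * (g + 1) - g * (g + 3) / 2

lemma half_key (g : ℤ) : 2 * (g * (g + 3) / 2) = g * (g + 3) := by
  obtain ⟨k, hk⟩ := Int.even_mul_succ_self g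
  have h : g * (g + 3) = 2 * (k + g) := by nlinarith [hk]
  rw [h, Int.mul_ediv_cancel_left _ (by norm_num)]

lemma consec (d : ℤ) : 0 ≤ d * (d - 1) := by
  rcases le_or_gt 1 d with h | h
  · nlinarith
  · nlinarith [Int.lt_iff_add_one_le.mp h]

theorem fval_sum_ineq (n g₁ g₂ g : ℤ) (hn : 3 ≤ n)
    (h₁ : 0 ≤ g₁) (h₁' : g₁ ≤ n - 2) (h₂ : 0 ≤ g₂) (h₂' : g₂ ≤ n - 2)
    (hg : 0 ≤ g) (hg' : g ≤ n - 3) (hsum : g₁ + g₂ + 2 > g + 1) :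
    fval (n - 1) g₁ + fval (n - 1) g₂ ≥ fval n g + 1 := by
  unfold fval
  have k1 := half_key g₁
  have k2 := half_key g₂
  have k3 := half_key g
  have hd : (0:ℤ) ≤ g₁ + g₂ - g := by linarith
  nlinarith [mul_nonneg h₁ h₂, consec (g₁ + g₂ - g),
    mul_nonneg hd (by linarith : (0:ℤ) ≤ n - 2 - g₁),
    mul_nonneg hd (by linarith : (0:ℤ) ≤ n - 2 - g₂)]
end

section
/- Let u = x_n x_{n-1} … x_2 x_1 be a vertex of the n-dimensional varietal hypercube VQ_n. Then a vertex v = y_n y_{n-1} … y_2 y_1 is adjacent to u if and only if either (1) there exists 1 ≤ i ≤ n with 3 ∤ i such that y_i = x_i + 1 and y_j = x_j for all j ≠ i, or (2) there exists 1 ≤ i ≤ n with 3 | i such that y_i = x_i + 1, y_{i-2} = x_{i-1} + x_{i-2}, and y_j = x_j for all j ∉ {i, i-2} (all arithmetic in Z_2). -/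
/-- The recursive adjacency relation of the varietal hypercube `VQ_n`.
Coordinate `i : Fin n` of a vertex stands for the bit `x_{i+1}` of the label
`x_n x_{n-1} … x_2 x_1`; in particular `Fin.last` is the prefix bit added last. -/
def VQRel : (n : ℕ) → (Fin n → ZMod 2) → (Fin n → ZMod 2) → Prop
  | 0, _, _ => False
  | n + 1, x, y =>
    if x (Fin.last n) = y (Fin.last n) then
      -- both in the same copy of `VQ_n`
      VQRel n (Fin.init x) (Fin.init y)
    else if (n + 1) % 3 = 0 then
      (∀ i : Fin n, (i : ℕ) < n - 2 → x i.castSucc = y i.castSucc) ∧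
        y ⟨n - 1, by omega⟩ = x ⟨n - 1, by omega⟩ ∧
        y ⟨n - 2, by omega⟩ = x ⟨n - 2, by omega⟩ + x ⟨n - 1, by omega⟩
    else
      ∀ i : Fin n, x i.castSucc = y i.castSucc

/-- The varietal hypercube `VQ_n`. -/
def varietalCube (n : ℕ) : SimpleGraph (Fin n → ZMod 2) :=
  SimpleGraph.fromRel (VQRel n)

/-!
Split off the top coordinate. An edge of `VQ_{n+1}` inside one copy is an edge of `VQ_n` and fixes
the top bit; an edge between the copies changes the top bit and is, by definition, the move at the
top coordinate (a plain flip, or when `3 ∣ n + 1` the flip that also adds `x_n` to `x_{n-1}`). So by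
induction on `n` the relation `VQRel` says that `v` comes from `u` by one such move. Every move is
an involution over `ZMod 2`, so the move relation is symmetric, and adjacency in
`SimpleGraph.fromRel` is again one move.
-/

section

variable {n : ℕ}

lemma ZMod.eq_add_one_iff_ne {a b : ZMod 2} : b = a + 1 ↔ a ≠ b := by
  revert a b; decide

lemma Fin.forall_ne_sub_two_iff (hn : 2 ≤ n) {P : Fin n → Prop} :
    (∀ i : Fin n, (i : ℕ) ≠ n - 2 → P i) ↔
      (∀ i : Fin n, (i : ℕ) < n - 2 → P i) ∧ P ⟨n - 1, by omega⟩ := by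
  refine ⟨fun h => ⟨fun i hi => h i hi.ne, h ⟨n - 1, by omega⟩ (by simp; omega)⟩,
    fun ⟨hlt, hlast⟩ i hi => ?_⟩
  obtain hi' | rfl : (i : ℕ) < n - 2 ∨ i = ⟨n - 1, by omega⟩ := by
    simp only [Fin.ext_iff]; omega
  exacts [hlt i hi', hlast]

def FlipAt (i : Fin n) (u v : Fin n → ZMod 2) : Prop :=
  v i = u i + 1 ∧ ∀ j : Fin n, j ≠ i → v j = u j

/-- Case (2) of the statement at the bit `x_{i+1}`. The indices `i - 1` and `i - 2` are truncated
subtractions, so this is the intended move only for `2 ≤ i`, which `3 ∣ i + 1` guarantees. -/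
def TwistAt (i : Fin n) (u v : Fin n → ZMod 2) : Prop :=
  v i = u i + 1 ∧
    v ⟨(i : ℕ) - 2, by omega⟩ = u ⟨(i : ℕ) - 1, by omega⟩ + u ⟨(i : ℕ) - 2, by omega⟩ ∧
    ∀ j : Fin n, j ≠ i → (j : ℕ) ≠ (i : ℕ) - 2 → v j = u j

lemma flipAt_castSucc_iff {i : Fin n} {u v : Fin (n + 1) → ZMod 2} :
    FlipAt i.castSucc u v ↔
      u (Fin.last n) = v (Fin.last n) ∧ FlipAt i (Fin.init u) (Fin.init v) := by
  simp [FlipAt, Fin.forall_fin_succ', Fin.init, Fin.castSucc_ne_last, eq_comm, and_comm,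
    and_left_comm]

lemma twistAt_castSucc_iff {i : Fin n} {u v : Fin (n + 1) → ZMod 2} :
    TwistAt i.castSucc u v ↔
      u (Fin.last n) = v (Fin.last n) ∧ TwistAt i (Fin.init u) (Fin.init v) := by
  have hlast : n ≠ (i : ℕ) - 2 := by omega
  simp [TwistAt, Fin.forall_fin_succ', Fin.init, Fin.castSucc_ne_last, eq_comm, hlast, and_comm,
    and_left_comm]

lemma flipAt_last_iff {u v : Fin (n + 1) → ZMod 2} :
    FlipAt (Fin.last n) u v ↔
      u (Fin.last n) ≠ v (Fin.last n) ∧ ∀ i : Fin n, u i.castSucc = v i.castSucc := by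
  simp [FlipAt, Fin.forall_fin_succ', Fin.castSucc_ne_last, ZMod.eq_add_one_iff_ne, eq_comm]

lemma twistAt_last_iff (hn : 2 ≤ n) {u v : Fin (n + 1) → ZMod 2} :
    TwistAt (Fin.last n) u v ↔
      u (Fin.last n) ≠ v (Fin.last n) ∧
        (∀ i : Fin n, (i : ℕ) < n - 2 → u i.castSucc = v i.castSucc) ∧
        v ⟨n - 1, by omega⟩ = u ⟨n - 1, by omega⟩ ∧
        v ⟨n - 2, by omega⟩ = u ⟨n - 2, by omega⟩ + u ⟨n - 1, by omega⟩ := by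
  simp [TwistAt, Fin.forall_fin_succ', Fin.castSucc_ne_last, ZMod.eq_add_one_iff_ne, eq_comm,
    Fin.forall_ne_sub_two_iff hn, add_comm, and_comm, and_left_comm, and_assoc]

lemma FlipAt.apply_ne {i : Fin n} {u v : Fin n → ZMod 2} (h : FlipAt i u v) : u i ≠ v i :=
  ZMod.eq_add_one_iff_ne.mp h.1

lemma TwistAt.apply_ne {i : Fin n} {u v : Fin n → ZMod 2} (h : TwistAt i u v) : u i ≠ v i :=
  ZMod.eq_add_one_iff_ne.mp h.1

lemma FlipAt.symm {i : Fin n} {u v : Fin n → ZMod 2} (h : FlipAt i u v) : FlipAt i v u :=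
  ⟨ZMod.eq_add_one_iff_ne.mpr h.apply_ne.symm, fun j hj => (h.2 j hj).symm⟩

lemma TwistAt.symm {i : Fin n} (hi : 2 ≤ (i : ℕ)) {u v : Fin n → ZMod 2} (h : TwistAt i u v) :
    TwistAt i v u := by
  have hmid : v ⟨(i : ℕ) - 1, by omega⟩ = u ⟨(i : ℕ) - 1, by omega⟩ :=
    h.2.2 _ (by simp [Fin.ext_iff]; omega) (by simp; omega)
  refine ⟨ZMod.eq_add_one_iff_ne.mpr h.apply_ne.symm, ?_, fun j hj hj' => (h.2.2 j hj hj').symm⟩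
  rw [hmid, h.2.1, ← add_assoc, CharTwo.add_self_eq_zero, zero_add]

def VQNeighbor (n : ℕ) (u v : Fin n → ZMod 2) : Prop :=
  ∃ i : Fin n, (¬ 3 ∣ (i : ℕ) + 1 ∧ FlipAt i u v) ∨ (3 ∣ (i : ℕ) + 1 ∧ TwistAt i u v)

lemma VQNeighbor.symm {u v : Fin n → ZMod 2} : VQNeighbor n u v → VQNeighbor n v u
  | ⟨i, .inl ⟨hi, h⟩⟩ => ⟨i, .inl ⟨hi, h.symm⟩⟩
  | ⟨i, .inr ⟨hi, h⟩⟩ => ⟨i, .inr ⟨hi, h.symm (by omega)⟩⟩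

lemma VQNeighbor.ne {u v : Fin n → ZMod 2} : VQNeighbor n u v → u ≠ v
  | ⟨i, .inl ⟨_, h⟩⟩ => ne_of_apply_ne (· i) h.apply_ne
  | ⟨i, .inr ⟨_, h⟩⟩ => ne_of_apply_ne (· i) h.apply_ne

end

lemma vqRel_iff_vqNeighbor : ∀ {n : ℕ} {u v : Fin n → ZMod 2}, VQRel n u v ↔ VQNeighbor n u v
  | 0, _, _ => by simp [VQRel, VQNeighbor]
  | n + 1, u, v => by
    rw [VQRel, VQNeighbor, Fin.exists_fin_succ']
    simp only [flipAt_castSucc_iff, twistAt_castSucc_iff, Fin.val_castSucc, Fin.val_last]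
    by_cases hl : u (Fin.last n) = v (Fin.last n)
    · have hflip : ¬ FlipAt (Fin.last n) u v := fun h => h.apply_ne hl
      have htwist : ¬ TwistAt (Fin.last n) u v := fun h => h.apply_ne hl
      simp [hl, hflip, htwist, vqRel_iff_vqNeighbor, VQNeighbor]
    · by_cases h3 : 3 ∣ n + 1
      · rw [if_neg hl, if_pos (Nat.mod_eq_zero_of_dvd h3)]
        simp [hl, h3, twistAt_last_iff (by omega : 2 ≤ n)]
      · rw [if_neg hl, if_neg (mt Nat.dvd_of_mod_eq_zero h3)]
        simp [hl, h3, flipAt_last_iff]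

theorem varietalCube_adj_iff (n : ℕ) (u v : Fin n → ZMod 2) :
    (varietalCube n).Adj u v ↔
      ∃ i : Fin n,
        (¬ (3 ∣ ((i : ℕ) + 1)) ∧ v i = u i + 1 ∧ ∀ j : Fin n, j ≠ i → v j = u j) ∨
        ((3 ∣ ((i : ℕ) + 1)) ∧ v i = u i + 1 ∧
          v ⟨(i : ℕ) - 2, by have := i.isLt; omega⟩ =
            u ⟨(i : ℕ) - 1, by have := i.isLt; omega⟩ +
              u ⟨(i : ℕ) - 2, by have := i.isLt; omega⟩ ∧
          ∀ j : Fin n, j ≠ i → (j : ℕ) ≠ (i : ℕ) - 2 → v j = u j) := by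
  change _ ↔ VQNeighbor n u v
  rw [varietalCube, SimpleGraph.fromRel_adj, vqRel_iff_vqNeighbor, vqRel_iff_vqNeighbor]
  exact ⟨fun ⟨_, h⟩ => h.elim id VQNeighbor.symm, fun h => ⟨h.ne, .inl h⟩⟩
end

section
/- Let n = 3s + t with s ≥ 0, 0 ≤ t ≤ 2. Let G_n = H_1 × ⋯ × H_s × Z_2^t, where each H_i = ⟨a_i, b_i | a_i^4 = b_i^2 = 1, b_i^{-1} a_i b_i = a_i^{-1}⟩ is a dihedral group of order 8, and let Ω_n = {a_i², b_i, a_i b_i (1 ≤ i ≤ s)} ∪ {c_1, …, c_t} where c_j are the standard generators of the Z_2 factors. Then the Cayley graph Cay(G_n, Ω_n) is isomorphic to the varietal hypercube VQ_n. -/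
/-- The Cayley graph of a group with respect to a connection set `S`. -/
def cayley {G : Type*} [Group G] (S : Set G) : SimpleGraph G :=
  SimpleGraph.fromRel (fun x y => ∃ s ∈ S, y = s * x)

/-- The group `G_n = H_1 × ⋯ × H_s × Z_2^t` where each `H_i` is dihedral of order 8. -/
abbrev GN (s t : ℕ) := (Fin s → DihedralGroup 4) × (Fin t → Multiplicative (ZMod 2))

/-- `a_i`, the rotation of order 4 in the `i`-th dihedral factor. -/
def aGen (s t : ℕ) (i : Fin s) : GN s t := (Pi.mulSingle i (DihedralGroup.r 1), 1)

/-- `b_i`, a reflection in the `i`-th dihedral factor. -/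
def bGen (s t : ℕ) (i : Fin s) : GN s t := (Pi.mulSingle i (DihedralGroup.sr 0), 1)

/-- `c_j`, the generator of the `j`-th `Z_2` factor. -/
def cGen (s t : ℕ) (j : Fin t) : GN s t :=
  (1, Pi.mulSingle j (Multiplicative.ofAdd (1 : ZMod 2)))

/-- The connection set `Ω_n = {a_i², b_i, a_i b_i (1 ≤ i ≤ s)} ∪ {c_1, …, c_t}`. -/
def OmegaN (s t : ℕ) : Set (GN s t) :=
  {x | (∃ i, x = (aGen s t i) ^ 2 ∨ x = bGen s t i ∨ x = aGen s t i * bGen s t i) ∨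
    ∃ j, x = cGen s t j}

def VQPat {n : ℕ} (x y : Fin n → ZMod 2) (i : Fin n) : Prop :=
  if (i : ℕ) % 3 = 2 then
    y i = x i + 1 ∧
    y ⟨(i:ℕ)-2, lt_of_le_of_lt (Nat.sub_le _ _) i.isLt⟩ =
      x ⟨(i:ℕ)-2, lt_of_le_of_lt (Nat.sub_le _ _) i.isLt⟩ +
      x ⟨(i:ℕ)-1, lt_of_le_of_lt (Nat.sub_le _ _) i.isLt⟩ ∧
    ∀ j : Fin n, (j:ℕ) ≠ (i:ℕ) → (j:ℕ) ≠ (i:ℕ)-2 → y j = x j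
  else
    y i = x i + 1 ∧ ∀ j : Fin n, (j:ℕ) ≠ (i:ℕ) → y j = x j

lemma zne : ∀ a b : ZMod 2, a ≠ b ↔ b = a + 1 := by decide
lemma zadd : ∀ a : ZMod 2, a ≠ a + 1 := by decide
lemma zflip : ∀ a b : ZMod 2, a = b + 1 → b = a + 1 := by decide
lemma zsw : ∀ a b c : ZMod 2, a = b + c → b = a + c := by decide

lemma vqpat_ne {n : ℕ} {x y : Fin n → ZMod 2} {i : Fin n} (hp : VQPat x y i) : x ≠ y := by
  unfold VQPat at hp
  intro he; subst he
  split_ifs at hp with h3 <;> exact zadd _ hp.1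

lemma vqpat_symm {n : ℕ} {x y : Fin n → ZMod 2} {i : Fin n} (hp : VQPat x y i) :
    VQPat y x i := by
  unfold VQPat at hp ⊢
  split_ifs at hp ⊢ with h3
  · obtain ⟨h1, h2, h4⟩ := hp
    have hi2 : (i:ℕ) ≥ 2 := by omega
    have hm : y ⟨(i:ℕ)-1, lt_of_le_of_lt (Nat.sub_le _ _) i.isLt⟩ =
        x ⟨(i:ℕ)-1, lt_of_le_of_lt (Nat.sub_le _ _) i.isLt⟩ :=
      h4 _ (by simp; omega) (by simp; omega)
    refine ⟨zflip _ _ h1, ?_, fun j hj1 hj2 => (h4 j hj1 hj2).symm⟩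
    have := zsw _ _ _ h2
    rw [hm]; exact this
  · exact ⟨zflip _ _ hp.1, fun j hj1 => (hp.2 j hj1).symm⟩

lemma vqrel_iff : ∀ (n : ℕ) (x y : Fin n → ZMod 2), VQRel n x y ↔ ∃ i, VQPat x y i := by
  intro n
  induction n with
  | zero => exact fun x y => by simp only [VQRel]; exact iff_of_false id (fun ⟨i,_⟩ => i.elim0)
  | succ n ih =>
    intro x y
    show (if x (Fin.last n) = y (Fin.last n) then VQRel n (Fin.init x) (Fin.init y)
      else if (n + 1) % 3 = 0 then _ else _) ↔ _
    by_cases h : x (Fin.last n) = y (Fin.last n)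
    · rw [if_pos h, ih]
      constructor
      · rintro ⟨i, hp⟩
        refine ⟨i.castSucc, ?_⟩
        unfold VQPat at hp ⊢
        simp only [Fin.coe_castSucc]
        split_ifs at hp ⊢ with h3
        · obtain ⟨h1, h2, h4⟩ := hp
          refine ⟨h1, h2, fun j hj1 hj2 => ?_⟩
          rcases Nat.lt_or_ge (j:ℕ) n with hj | hj
          · have := h4 ⟨j, hj⟩ hj1 hj2
            exact this
          · have : j = Fin.last n := Fin.ext (by simp only [Fin.val_last]; omega)
            rw [this]; exact h.symm
        · obtain ⟨h1, h4⟩ := hp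
          refine ⟨h1, fun j hj1 => ?_⟩
          rcases Nat.lt_or_ge (j:ℕ) n with hj | hj
          · exact h4 ⟨j, hj⟩ hj1
          · have : j = Fin.last n := Fin.ext (by simp only [Fin.val_last]; omega)
            rw [this]; exact h.symm
      · rintro ⟨i, hp⟩
        have hin : (i:ℕ) < n := by
          rcases Nat.lt_or_ge (i:ℕ) n with hi | hi
          · exact hi
          · exfalso
            have hil : i = Fin.last n := Fin.ext (by have := i.isLt; simp [Fin.last]; omega)
            unfold VQPat at hp
            split_ifs at hp with h3 <;>
              [skip; skip] <;>
            · have h1 := hp.1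
              rw [hil] at h1
              exact zadd _ (h.trans h1)
        refine ⟨⟨i, hin⟩, ?_⟩
        unfold VQPat at hp ⊢
        simp only
        split_ifs at hp ⊢ with h3
        · obtain ⟨h1, h2, h4⟩ := hp
          exact ⟨h1, h2, fun j hj1 hj2 => h4 j.castSucc hj1 hj2⟩
        · exact ⟨hp.1, fun j hj1 => hp.2 j.castSucc hj1⟩
    · rw [if_neg h]
      have hlast : y (Fin.last n) = x (Fin.last n) + 1 := (zne _ _).mp h
      by_cases h3 : (n + 1) % 3 = 0
      · rw [if_pos h3]
        have hn2 : n ≥ 2 := by omega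
        constructor
        · rintro ⟨h4, h5, h6⟩
          refine ⟨Fin.last n, ?_⟩
          unfold VQPat
          rw [if_pos (by simp [Fin.last]; omega)]
          refine ⟨hlast, ?_, fun j hj1 hj2 => ?_⟩
          · simp only [Fin.last]
            exact h6
          · simp only [Fin.last] at hj1 hj2
            have hjn : (j:ℕ) < n := by have := j.isLt; omega
            rcases Nat.lt_or_ge (j:ℕ) (n-2) with hj | hj
            · exact (h4 ⟨j, hjn⟩ hj).symm
            · have : (j:ℕ) = n - 1 := by omega
              have hje : j = ⟨n-1, by omega⟩ := Fin.ext this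
              rw [hje]; exact h5
        · rintro ⟨i, hp⟩
          have hil : (i:ℕ) = n := by
            by_contra hne
            have hin : (i:ℕ) < n := by have := i.isLt; omega
            unfold VQPat at hp
            have : y (Fin.last n) = x (Fin.last n) := by
              split_ifs at hp with h2
              · exact hp.2.2 (Fin.last n) (by simp [Fin.last]; omega)
                  (by simp [Fin.last]; have := i.isLt; omega)
              · exact hp.2 (Fin.last n) (by simp [Fin.last]; omega)
            exact zadd _ (this.symm.trans hlast)
          unfold VQPat at hp
          rw [if_pos (by rw [hil]; omega)] at hp
          obtain ⟨h1, h2, h4⟩ := hp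
          refine ⟨fun j hj => (h4 j.castSucc (by simp; omega) (by simp; omega)).symm, ?_, ?_⟩
          · have := h4 ⟨n-1, by omega⟩ (by simp; omega) (by simp; omega)
            simpa [hil] using this
          · simpa [hil] using h2
      · rw [if_neg h3]
        constructor
        · intro h4
          refine ⟨Fin.last n, ?_⟩
          unfold VQPat
          rw [if_neg (by simp [Fin.last]; omega)]
          refine ⟨hlast, fun j hj1 => ?_⟩
          simp only [Fin.last] at hj1
          have hjn : (j:ℕ) < n := by have := j.isLt; omega
          exact (h4 ⟨j, hjn⟩).symm
        · rintro ⟨i, hp⟩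
          have hil : (i:ℕ) = n := by
            by_contra hne
            have hin : (i:ℕ) < n := by have := i.isLt; omega
            unfold VQPat at hp
            have : y (Fin.last n) = x (Fin.last n) := by
              split_ifs at hp with h2
              · exact hp.2.2 (Fin.last n) (by simp [Fin.last]; omega)
                  (by simp [Fin.last]; have := i.isLt; omega)
              · exact hp.2 (Fin.last n) (by simp [Fin.last]; omega)
            exact absurd this.symm h
          unfold VQPat at hp
          rw [if_neg (by rw [hil]; omega)] at hp
          exact fun j => (hp.2 j.castSucc (by simp; omega)).symm

lemma vq_adj (n : ℕ) (u v : Fin n → ZMod 2) :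
    (varietalCube n).Adj u v ↔ ∃ i, VQPat u v i := by
  rw [varietalCube, SimpleGraph.fromRel_adj, vqrel_iff, vqrel_iff]
  constructor
  · rintro ⟨hne, (⟨i, hp⟩ | ⟨i, hp⟩)⟩
    · exact ⟨i, hp⟩
    · exact ⟨i, vqpat_symm hp⟩
  · rintro ⟨i, hp⟩
    exact ⟨vqpat_ne hp, Or.inl ⟨i, hp⟩⟩

-- phi
def psi : DihedralGroup 4 → Fin 3 → ZMod 2
  | .r j => ![![0,0,0], ![1,1,1], ![1,0,0], ![0,1,1]] ⟨j.val, j.val_lt⟩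
  | .sr j => ![![0,1,0], ![1,0,1], ![1,1,0], ![0,0,1]] ⟨j.val, j.val_lt⟩

def psiInv (v : Fin 3 → ZMod 2) : DihedralGroup 4 :=
  if v 1 = 0 then
    (if v = ![0,0,0] then .r 0 else if v = ![1,0,0] then .r 2
     else if v = ![1,0,1] then .sr 1 else .sr 3)
  else
    (if v = ![1,1,1] then .r 1 else if v = ![0,1,1] then .r 3
     else if v = ![0,1,0] then .sr 0 else .sr 2)

lemma psi_leftInv : ∀ d, psiInv (psi d) = d := by decide
lemma psi_rightInv : ∀ v, psi (psiInv v) = v := by decide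

lemma psi_r2 : ∀ d, psi (DihedralGroup.r 2 * d) = fun k => psi d k + if k = 0 then 1 else 0 := by decide
lemma psi_sr0 : ∀ d, psi (DihedralGroup.sr 0 * d) = fun k => psi d k + if k = 1 then 1 else 0 := by decide
lemma psi_ab : ∀ d, psi (DihedralGroup.r 1 * DihedralGroup.sr 0 * d) =
    fun k => psi d k + if k = 2 then 1 else if k = 0 then psi d 1 else 0 := by decide

def phi (s t : ℕ) (x : GN s t) : Fin (3*s+t) → ZMod 2 := fun m =>
  if h : (m:ℕ) < 3*s then psi (x.1 ⟨(m:ℕ)/3, by omega⟩) ⟨(m:ℕ)%3, by omega⟩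
  else Multiplicative.toAdd (x.2 ⟨(m:ℕ) - 3*s, by have := m.isLt; omega⟩)

def phiInv (s t : ℕ) (v : Fin (3*s+t) → ZMod 2) : GN s t :=
  (fun i => psiInv (fun r => v ⟨3*(i:ℕ) + (r:ℕ), by have := i.isLt; have := r.isLt; omega⟩),
   fun j => Multiplicative.ofAdd (v ⟨3*s + (j:ℕ), by have := j.isLt; omega⟩))

lemma phi_apply_lt (s t : ℕ) (x : GN s t) (a : ℕ) (hm : a < 3*s+t) (h : a < 3*s)
    (h1 : a/3 < s) (h2 : a%3 < 3) :
    phi s t x ⟨a, hm⟩ = psi (x.1 ⟨a/3, h1⟩) ⟨a%3, h2⟩ := by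
  rw [phi]; exact dif_pos h

lemma phi_apply_ge (s t : ℕ) (x : GN s t) (a : ℕ) (hm : a < 3*s+t) (h : ¬ a < 3*s)
    (h1 : a - 3*s < t) :
    phi s t x ⟨a, hm⟩ = Multiplicative.toAdd (x.2 ⟨a - 3*s, h1⟩) := by
  rw [phi]; exact dif_neg h

lemma phi_left (s t : ℕ) : Function.LeftInverse (phiInv s t) (phi s t) := by
  intro x
  refine Prod.ext ?_ ?_
  · funext i
    have hi : (i:ℕ) < s := i.isLt
    show psiInv (fun r => phi s t x ⟨3*(i:ℕ)+(r:ℕ), _⟩) = x.1 i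
    have : (fun r : Fin 3 => phi s t x ⟨3*(i:ℕ)+(r:ℕ), by have := r.isLt; omega⟩)
        = psi (x.1 i) := by
      funext r
      have hr : (r:ℕ) < 3 := r.isLt
      rw [phi_apply_lt s t x (3*(i:ℕ)+(r:ℕ)) (by omega) (by omega) (by omega) (by omega)]
      have e1 : (⟨(3*(i:ℕ)+(r:ℕ))/3, by omega⟩ : Fin s) = i :=
        Fin.ext (show (3*(i:ℕ)+(r:ℕ))/3 = (i:ℕ) by omega)
      have e2 : (⟨(3*(i:ℕ)+(r:ℕ))%3, by omega⟩ : Fin 3) = r :=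
        Fin.ext (show (3*(i:ℕ)+(r:ℕ))%3 = (r:ℕ) by omega)
      rw [e1, e2]
    rw [this, psi_leftInv]
  · funext j
    have hj : (j:ℕ) < t := j.isLt
    show Multiplicative.ofAdd (phi s t x ⟨3*s+(j:ℕ), _⟩) = x.2 j
    rw [phi_apply_ge s t x (3*s+(j:ℕ)) (by omega) (by omega) (by omega)]
    have : (⟨3*s+(j:ℕ)-3*s, by omega⟩ : Fin t) = j :=
      Fin.ext (show 3*s+(j:ℕ)-3*s = (j:ℕ) by omega)
    rw [this]
    simp

lemma phi_right (s t : ℕ) : Function.RightInverse (phiInv s t) (phi s t) := by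
  intro v
  funext m
  have hm := m.isLt
  rcases Nat.lt_or_ge (m:ℕ) (3*s) with h | h
  · rw [show m = ⟨(m:ℕ), hm⟩ from rfl,
      phi_apply_lt s t _ (m:ℕ) hm h (by omega) (by omega)]
    show psi (psiInv (fun r => v ⟨3*((m:ℕ)/3)+(r:ℕ), _⟩)) ⟨(m:ℕ)%3, _⟩ = v m
    rw [psi_rightInv]
    show v ⟨3*((m:ℕ)/3)+((m:ℕ)%3), _⟩ = v m
    congr 1
    exact Fin.ext (show 3*((m:ℕ)/3)+((m:ℕ)%3) = (m:ℕ) by omega)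
  · rw [show m = ⟨(m:ℕ), hm⟩ from rfl,
      phi_apply_ge s t _ (m:ℕ) hm (by omega) (by omega)]
    show Multiplicative.toAdd (Multiplicative.ofAdd (v ⟨3*s+((m:ℕ)-3*s), _⟩)) = v m
    rw [toAdd_ofAdd]
    congr 1
    exact Fin.ext (show 3*s+((m:ℕ)-3*s) = (m:ℕ) by omega)

def phiEquiv (s t : ℕ) : GN s t ≃ (Fin (3*s+t) → ZMod 2) :=
  ⟨phi s t, phiInv s t, phi_left s t, phi_right s t⟩

lemma aGen_sq (s t : ℕ) (i : Fin s) :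
    (aGen s t i)^2 = (Pi.mulSingle i (DihedralGroup.r 2), 1) := by
  rw [sq, aGen, Prod.mk_mul_mk, one_mul, ← Pi.mulSingle_mul,
    show DihedralGroup.r 1 * DihedralGroup.r 1 = (DihedralGroup.r 2 : DihedralGroup 4) by decide]

lemma abGen (s t : ℕ) (i : Fin s) :
    aGen s t i * bGen s t i
      = (Pi.mulSingle i (DihedralGroup.r 1 * DihedralGroup.sr 0), 1) := by
  rw [aGen, bGen, Prod.mk_mul_mk, one_mul, ← Pi.mulSingle_mul]

lemma omega_inv {s t : ℕ} {g : GN s t} (hg : g ∈ OmegaN s t) : g * g = 1 := by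
  rcases hg with ⟨i, rfl | rfl | rfl⟩ | ⟨j, rfl⟩
  · rw [aGen_sq, Prod.mk_mul_mk, one_mul, ← Pi.mulSingle_mul,
      show DihedralGroup.r 2 * DihedralGroup.r 2 = (1 : DihedralGroup 4) by decide,
      Pi.mulSingle_one]
    rfl
  · rw [bGen, Prod.mk_mul_mk, one_mul, ← Pi.mulSingle_mul,
      show DihedralGroup.sr 0 * DihedralGroup.sr 0 = (1 : DihedralGroup 4) by decide,
      Pi.mulSingle_one]
    rfl
  · rw [abGen, Prod.mk_mul_mk, one_mul, ← Pi.mulSingle_mul,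
      show (DihedralGroup.r 1 * DihedralGroup.sr 0) * (DihedralGroup.r 1 * DihedralGroup.sr 0)
        = (1 : DihedralGroup 4) by decide,
      Pi.mulSingle_one]
    rfl
  · rw [cGen, Prod.mk_mul_mk, one_mul, ← Pi.mulSingle_mul,
      show Multiplicative.ofAdd (1 : ZMod 2) * Multiplicative.ofAdd (1 : ZMod 2) = 1 by decide,
      Pi.mulSingle_one]
    rfl

lemma omega_ne_one {s t : ℕ} {g : GN s t} (hg : g ∈ OmegaN s t) : g ≠ 1 := by
  rcases hg with ⟨i, rfl | rfl | rfl⟩ | ⟨j, rfl⟩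
  · rw [aGen_sq]
    intro h
    have h2 := congrFun (congrArg Prod.fst h) i
    simp only [Pi.mulSingle_eq_same, Prod.fst_one, Prod.snd_one, Pi.one_apply] at h2
    exact absurd h2 (by decide)
  · rw [bGen]
    intro h
    have h2 := congrFun (congrArg Prod.fst h) i
    simp only [Pi.mulSingle_eq_same, Prod.fst_one, Prod.snd_one, Pi.one_apply] at h2
    exact absurd h2 (by decide)
  · rw [abGen]
    intro h
    have h2 := congrFun (congrArg Prod.fst h) i
    simp only [Pi.mulSingle_eq_same, Prod.fst_one, Prod.snd_one, Pi.one_apply] at h2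
    exact absurd h2 (by decide)
  · rw [cGen]
    intro h
    have h2 := congrFun (congrArg Prod.snd h) j
    simp only [Pi.mulSingle_eq_same, Prod.fst_one, Prod.snd_one, Pi.one_apply] at h2
    exact absurd h2 (by decide)

lemma cayley_adj {s t : ℕ} (x y : GN s t) :
    (cayley (OmegaN s t)).Adj x y ↔ ∃ g ∈ OmegaN s t, y = g * x := by
  rw [cayley, SimpleGraph.fromRel_adj]
  constructor
  · rintro ⟨hne, (⟨g, hg, rfl⟩ | ⟨g, hg, he⟩)⟩
    · exact ⟨g, hg, rfl⟩
    · exact ⟨g, hg, by rw [he, ← mul_assoc, omega_inv hg, one_mul]⟩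
  · rintro ⟨g, hg, rfl⟩
    refine ⟨?_, Or.inl ⟨g, hg, rfl⟩⟩
    intro hx
    have : g * x = 1 * x := by rw [one_mul, ← hx]
    exact omega_ne_one hg (mul_right_cancel this)

lemma phi_apply_lt' (s t : ℕ) (x : GN s t) (m : Fin (3*s+t)) (h : (m:ℕ) < 3*s)
    (h1 : (m:ℕ)/3 < s) (h2 : (m:ℕ)%3 < 3) :
    phi s t x m = psi (x.1 ⟨(m:ℕ)/3, h1⟩) ⟨(m:ℕ)%3, h2⟩ := by
  simp only [phi]; rw [dif_pos h]

lemma phi_apply_ge' (s t : ℕ) (x : GN s t) (m : Fin (3*s+t)) (h : ¬ (m:ℕ) < 3*s)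
    (h1 : (m:ℕ) - 3*s < t) :
    phi s t x m = Multiplicative.toAdd (x.2 ⟨(m:ℕ) - 3*s, h1⟩) := by
  simp only [phi]; rw [dif_neg h]

lemma phi_c (s t : ℕ) (j : Fin t) (x : GN s t) (m : Fin (3*s+t)) :
    phi s t (cGen s t j * x) m =
      if (m:ℕ) = 3*s + (j:ℕ) then phi s t x m + 1 else phi s t x m := by
  have hm := m.isLt
  have hj : (j:ℕ) < t := j.isLt
  rcases Nat.lt_or_ge (m:ℕ) (3*s) with h | h
  · rw [phi_apply_lt' s t _ m h (by omega) (by omega),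
      phi_apply_lt' s t x m h (by omega) (by omega),
      if_neg (show ¬ (m:ℕ) = 3*s + (j:ℕ) by omega)]
    have key : (cGen s t j * x).1 = x.1 := one_mul x.1
    rw [key]
  · rw [phi_apply_ge' s t _ m (by omega) (by omega),
      phi_apply_ge' s t x m (by omega) (by omega)]
    have key : (cGen s t j * x).2
        = Pi.mulSingle j (Multiplicative.ofAdd (1 : ZMod 2)) * x.2 := rfl
    rw [key, Pi.mul_apply, toAdd_mul, Pi.mulSingle_apply]
    by_cases he : (m:ℕ) = 3*s + (j:ℕ)
    · rw [if_pos he,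
        if_pos (Fin.ext (show (m:ℕ)-3*s = (j:ℕ) by omega) :
          (⟨(m:ℕ)-3*s, (by omega : (m:ℕ)-3*s < t)⟩ : Fin t) = j),
        toAdd_ofAdd, add_comm]
    · rw [if_neg he,
        if_neg (fun hc : (⟨(m:ℕ)-3*s, (by omega : (m:ℕ)-3*s < t)⟩ : Fin t) = j =>
          he (by have h5 : (m:ℕ)-3*s = (j:ℕ) := congrArg Fin.val hc; omega)),
        toAdd_one, zero_add]

lemma phi_a2 (s t : ℕ) (i : Fin s) (x : GN s t) (m : Fin (3*s+t)) :
    phi s t ((aGen s t i)^2 * x) m =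
      if (m:ℕ) = 3*(i:ℕ) then phi s t x m + 1 else phi s t x m := by
  have hm := m.isLt
  have hi : (i:ℕ) < s := i.isLt
  rw [aGen_sq]
  rcases Nat.lt_or_ge (m:ℕ) (3*s) with h | h
  · rw [phi_apply_lt' s t _ m h (by omega) (by omega),
      phi_apply_lt' s t x m h (by omega) (by omega)]
    have key : ((Pi.mulSingle i (DihedralGroup.r 2), 1) * x).1
        = Pi.mulSingle i (DihedralGroup.r 2) * x.1 := rfl
    rw [key, Pi.mul_apply, Pi.mulSingle_apply]
    by_cases hk : (m:ℕ)/3 = (i:ℕ)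
    · rw [if_pos (Fin.ext hk : (⟨(m:ℕ)/3, (by omega : (m:ℕ)/3 < s)⟩ : Fin s) = i),
        show x.1 (⟨(m:ℕ)/3, (by omega : (m:ℕ)/3 < s)⟩ : Fin s) = x.1 i from
          congrArg x.1 (Fin.ext hk)]
      simp only [psi_r2]
      by_cases h0 : (m:ℕ)%3 = 0
      · rw [if_pos (show (m:ℕ) = 3*(i:ℕ) by omega),
          if_pos (Fin.ext h0 : (⟨(m:ℕ)%3, (by omega : (m:ℕ)%3 < 3)⟩ : Fin 3) = 0)]
      · rw [if_neg (show ¬ (m:ℕ) = 3*(i:ℕ) by omega),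
          if_neg (fun hc : (⟨(m:ℕ)%3, (by omega : (m:ℕ)%3 < 3)⟩ : Fin 3) = 0 =>
            h0 (congrArg Fin.val hc)), add_zero]
    · rw [if_neg (fun hc : (⟨(m:ℕ)/3, (by omega : (m:ℕ)/3 < s)⟩ : Fin s) = i =>
          hk (congrArg Fin.val hc)),
        one_mul, if_neg (show ¬ (m:ℕ) = 3*(i:ℕ) by omega)]
  · rw [phi_apply_ge' s t _ m (by omega) (by omega),
      phi_apply_ge' s t x m (by omega) (by omega),
      if_neg (show ¬ (m:ℕ) = 3*(i:ℕ) by omega)]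
    have key : ((Pi.mulSingle i (DihedralGroup.r 2), 1) * x).2 = x.2 := one_mul x.2
    rw [key]

lemma phi_b (s t : ℕ) (i : Fin s) (x : GN s t) (m : Fin (3*s+t)) :
    phi s t (bGen s t i * x) m =
      if (m:ℕ) = 3*(i:ℕ)+1 then phi s t x m + 1 else phi s t x m := by
  have hm := m.isLt
  have hi : (i:ℕ) < s := i.isLt
  rw [bGen]
  rcases Nat.lt_or_ge (m:ℕ) (3*s) with h | h
  · rw [phi_apply_lt' s t _ m h (by omega) (by omega),
      phi_apply_lt' s t x m h (by omega) (by omega)]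
    have key : ((Pi.mulSingle i (DihedralGroup.sr 0), 1) * x).1
        = Pi.mulSingle i (DihedralGroup.sr 0) * x.1 := rfl
    rw [key, Pi.mul_apply, Pi.mulSingle_apply]
    by_cases hk : (m:ℕ)/3 = (i:ℕ)
    · rw [if_pos (Fin.ext hk : (⟨(m:ℕ)/3, (by omega : (m:ℕ)/3 < s)⟩ : Fin s) = i),
        show x.1 (⟨(m:ℕ)/3, (by omega : (m:ℕ)/3 < s)⟩ : Fin s) = x.1 i from
          congrArg x.1 (Fin.ext hk)]
      simp only [psi_sr0]
      by_cases h0 : (m:ℕ)%3 = 1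
      · rw [if_pos (show (m:ℕ) = 3*(i:ℕ)+1 by omega),
          if_pos (Fin.ext h0 : (⟨(m:ℕ)%3, (by omega : (m:ℕ)%3 < 3)⟩ : Fin 3) = 1)]
      · rw [if_neg (show ¬ (m:ℕ) = 3*(i:ℕ)+1 by omega),
          if_neg (fun hc : (⟨(m:ℕ)%3, (by omega : (m:ℕ)%3 < 3)⟩ : Fin 3) = 1 =>
            h0 (congrArg Fin.val hc)), add_zero]
    · rw [if_neg (fun hc : (⟨(m:ℕ)/3, (by omega : (m:ℕ)/3 < s)⟩ : Fin s) = i =>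
          hk (congrArg Fin.val hc)),
        one_mul, if_neg (show ¬ (m:ℕ) = 3*(i:ℕ)+1 by omega)]
  · rw [phi_apply_ge' s t _ m (by omega) (by omega),
      phi_apply_ge' s t x m (by omega) (by omega),
      if_neg (show ¬ (m:ℕ) = 3*(i:ℕ)+1 by omega)]
    have key : ((Pi.mulSingle i (DihedralGroup.sr 0), 1) * x).2 = x.2 := one_mul x.2
    rw [key]

lemma phi_abg (s t : ℕ) (i : Fin s) (x : GN s t) (m : Fin (3*s+t)) :
    phi s t ((aGen s t i * bGen s t i) * x) m =
      if (m:ℕ) = 3*(i:ℕ)+2 then phi s t x m + 1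
      else if (m:ℕ) = 3*(i:ℕ) then phi s t x m + psi (x.1 i) 1
      else phi s t x m := by
  have hm := m.isLt
  have hi : (i:ℕ) < s := i.isLt
  rw [abGen]
  rcases Nat.lt_or_ge (m:ℕ) (3*s) with h | h
  · rw [phi_apply_lt' s t _ m h (by omega) (by omega),
      phi_apply_lt' s t x m h (by omega) (by omega)]
    have key : ((Pi.mulSingle i (DihedralGroup.r 1 * DihedralGroup.sr 0), 1) * x).1
        = Pi.mulSingle i (DihedralGroup.r 1 * DihedralGroup.sr 0) * x.1 := rfl
    rw [key, Pi.mul_apply, Pi.mulSingle_apply]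
    by_cases hk : (m:ℕ)/3 = (i:ℕ)
    · rw [if_pos (Fin.ext hk : (⟨(m:ℕ)/3, (by omega : (m:ℕ)/3 < s)⟩ : Fin s) = i),
        show x.1 (⟨(m:ℕ)/3, (by omega : (m:ℕ)/3 < s)⟩ : Fin s) = x.1 i from
          congrArg x.1 (Fin.ext hk)]
      simp only [psi_ab]
      by_cases h2 : (m:ℕ)%3 = 2
      · rw [if_pos (show (m:ℕ) = 3*(i:ℕ)+2 by omega),
          if_pos (Fin.ext h2 : (⟨(m:ℕ)%3, (by omega : (m:ℕ)%3 < 3)⟩ : Fin 3) = 2)]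
      · rw [if_neg (show ¬ (m:ℕ) = 3*(i:ℕ)+2 by omega),
          if_neg (fun hc : (⟨(m:ℕ)%3, (by omega : (m:ℕ)%3 < 3)⟩ : Fin 3) = 2 =>
            h2 (congrArg Fin.val hc))]
        by_cases h0 : (m:ℕ)%3 = 0
        · rw [if_pos (show (m:ℕ) = 3*(i:ℕ) by omega),
            if_pos (Fin.ext h0 : (⟨(m:ℕ)%3, (by omega : (m:ℕ)%3 < 3)⟩ : Fin 3) = 0)]
        · rw [if_neg (show ¬ (m:ℕ) = 3*(i:ℕ) by omega),
            if_neg (fun hc : (⟨(m:ℕ)%3, (by omega : (m:ℕ)%3 < 3)⟩ : Fin 3) = 0 =>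
              h0 (congrArg Fin.val hc)), add_zero]
    · rw [if_neg (fun hc : (⟨(m:ℕ)/3, (by omega : (m:ℕ)/3 < s)⟩ : Fin s) = i =>
          hk (congrArg Fin.val hc)),
        one_mul, if_neg (show ¬ (m:ℕ) = 3*(i:ℕ)+2 by omega),
        if_neg (show ¬ (m:ℕ) = 3*(i:ℕ) by omega)]
  · rw [phi_apply_ge' s t _ m (by omega) (by omega),
      phi_apply_ge' s t x m (by omega) (by omega),
      if_neg (show ¬ (m:ℕ) = 3*(i:ℕ)+2 by omega),
      if_neg (show ¬ (m:ℕ) = 3*(i:ℕ) by omega)]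
    have key : ((Pi.mulSingle i (DihedralGroup.r 1 * DihedralGroup.sr 0), 1) * x).2 = x.2 := one_mul x.2
    rw [key]

lemma vqpat_intro_flip {n : ℕ} (x y : Fin n → ZMod 2) (i : Fin n) (h3 : ¬ (i:ℕ) % 3 = 2)
    (h1 : y i = x i + 1) (h2 : ∀ j : Fin n, (j:ℕ) ≠ (i:ℕ) → y j = x j) : VQPat x y i := by
  unfold VQPat; rw [if_neg h3]; exact ⟨h1, h2⟩

lemma vqpat_intro_twist {n : ℕ} (x y : Fin n → ZMod 2) (i : Fin n) (h3 : (i:ℕ) % 3 = 2)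
    (h1 : y i = x i + 1)
    (h2 : y ⟨(i:ℕ)-2, lt_of_le_of_lt (Nat.sub_le _ _) i.isLt⟩ =
      x ⟨(i:ℕ)-2, lt_of_le_of_lt (Nat.sub_le _ _) i.isLt⟩ +
      x ⟨(i:ℕ)-1, lt_of_le_of_lt (Nat.sub_le _ _) i.isLt⟩)
    (h4 : ∀ j : Fin n, (j:ℕ) ≠ (i:ℕ) → (j:ℕ) ≠ (i:ℕ)-2 → y j = x j) : VQPat x y i := by
  unfold VQPat; rw [if_pos h3]; exact ⟨h1, h2, h4⟩

lemma vqpat_elim_flip {n : ℕ} (x y : Fin n → ZMod 2) (i : Fin n) (h3 : ¬ (i:ℕ) % 3 = 2)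
    (hp : VQPat x y i) :
    y i = x i + 1 ∧ ∀ j : Fin n, (j:ℕ) ≠ (i:ℕ) → y j = x j := by
  unfold VQPat at hp; rwa [if_neg h3] at hp

lemma vqpat_elim_twist {n : ℕ} (x y : Fin n → ZMod 2) (i : Fin n) (h3 : (i:ℕ) % 3 = 2)
    (hp : VQPat x y i) :
    y i = x i + 1 ∧
    y ⟨(i:ℕ)-2, lt_of_le_of_lt (Nat.sub_le _ _) i.isLt⟩ =
      x ⟨(i:ℕ)-2, lt_of_le_of_lt (Nat.sub_le _ _) i.isLt⟩ +
      x ⟨(i:ℕ)-1, lt_of_le_of_lt (Nat.sub_le _ _) i.isLt⟩ ∧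
    ∀ j : Fin n, (j:ℕ) ≠ (i:ℕ) → (j:ℕ) ≠ (i:ℕ)-2 → y j = x j := by
  unfold VQPat at hp; rwa [if_pos h3] at hp

lemma main_equiv (s t : ℕ) (ht : t ≤ 2) (x y : GN s t) :
    (∃ g ∈ OmegaN s t, y = g * x) ↔ ∃ i, VQPat (phi s t x) (phi s t y) i := by
  constructor
  · rintro ⟨g, hg, rfl⟩
    rcases hg with ⟨i, rfl | rfl | rfl⟩ | ⟨j, rfl⟩
    · have hi : (i:ℕ) < s := i.isLt
      refine ⟨⟨3*(i:ℕ), by omega⟩,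
        vqpat_intro_flip _ _ _ (show ¬ (3*(i:ℕ)) % 3 = 2 by omega) ?_ ?_⟩
      · rw [phi_a2, if_pos (show 3*(i:ℕ) = 3*(i:ℕ) from rfl)]
      · intro j hj
        rw [phi_a2, if_neg (show ¬ (j:ℕ) = 3*(i:ℕ) from hj)]
    · have hi : (i:ℕ) < s := i.isLt
      refine ⟨⟨3*(i:ℕ)+1, by omega⟩,
        vqpat_intro_flip _ _ _ (show ¬ (3*(i:ℕ)+1) % 3 = 2 by omega) ?_ ?_⟩
      · rw [phi_b, if_pos (show 3*(i:ℕ)+1 = 3*(i:ℕ)+1 from rfl)]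
      · intro j hj
        rw [phi_b, if_neg (show ¬ (j:ℕ) = 3*(i:ℕ)+1 from hj)]
    · have hi : (i:ℕ) < s := i.isLt
      refine ⟨⟨3*(i:ℕ)+2, by omega⟩,
        vqpat_intro_twist _ _ _ (show (3*(i:ℕ)+2) % 3 = 2 by omega) ?_ ?_ ?_⟩
      · rw [phi_abg, if_pos (show 3*(i:ℕ)+2 = 3*(i:ℕ)+2 from rfl)]
      · rw [phi_abg, if_neg (show ¬ (3*(i:ℕ)+2-2) = 3*(i:ℕ)+2 by omega),
          if_pos (show (3*(i:ℕ)+2-2) = 3*(i:ℕ) by omega)]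
        congr 1
        rw [phi_apply_lt' s t x ⟨3*(i:ℕ)+2-1, by omega⟩ (show 3*(i:ℕ)+2-1 < 3*s by omega)
          (show (3*(i:ℕ)+2-1)/3 < s by omega) (show (3*(i:ℕ)+2-1)%3 < 3 by omega)]
        exact congrArg₂ psi
          (congrArg x.1 (Fin.ext (show (i:ℕ) = (3*(i:ℕ)+2-1)/3 by omega)))
          (Fin.ext (show (1:ℕ) = (3*(i:ℕ)+2-1)%3 by omega))
      · intro j hj1 hj2
        rw [phi_abg, if_neg (show ¬ (j:ℕ) = 3*(i:ℕ)+2 from hj1),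
          if_neg (show ¬ (j:ℕ) = 3*(i:ℕ) from hj2)]
    · have hj : (j:ℕ) < t := j.isLt
      refine ⟨⟨3*s+(j:ℕ), by omega⟩,
        vqpat_intro_flip _ _ _ (show ¬ (3*s+(j:ℕ)) % 3 = 2 by omega) ?_ ?_⟩
      · rw [phi_c, if_pos (show 3*s+(j:ℕ) = 3*s+(j:ℕ) from rfl)]
      · intro j' hj'
        rw [phi_c, if_neg (show ¬ (j':ℕ) = 3*s+(j:ℕ) from hj')]
  · rintro ⟨i0, hp⟩
    have hinj : Function.Injective (phi s t) := (phi_left s t).injective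
    have ha : (i0:ℕ) < 3*s+t := i0.isLt
    by_cases h3 : (i0:ℕ) % 3 = 2
    · have hlt : (i0:ℕ) < 3*s := by omega
      obtain ⟨h1, h2, h4⟩ := vqpat_elim_twist _ _ i0 h3 hp
      refine ⟨aGen s t ⟨(i0:ℕ)/3, by omega⟩ * bGen s t ⟨(i0:ℕ)/3, by omega⟩,
        Or.inl ⟨⟨(i0:ℕ)/3, by omega⟩, Or.inr (Or.inr rfl)⟩, hinj ?_⟩
      funext m
      have hm := m.isLt
      rw [phi_abg]
      by_cases em2 : (m:ℕ) = (i0:ℕ)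
      · rw [if_pos (show (m:ℕ) = 3*((i0:ℕ)/3)+2 by omega)]
        rw [show m = (⟨(i0:ℕ), ha⟩ : Fin (3*s+t)) from Fin.ext em2]
        exact h1
      · by_cases em0 : (m:ℕ) = (i0:ℕ)-2
        · rw [if_neg (show ¬ (m:ℕ) = 3*((i0:ℕ)/3)+2 by omega),
            if_pos (show (m:ℕ) = 3*((i0:ℕ)/3) by omega),
            show m = (⟨(i0:ℕ)-2, lt_of_le_of_lt (Nat.sub_le _ _) i0.isLt⟩ : Fin (3*s+t))
              from Fin.ext em0,
            h2]
          congr 1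
          rw [phi_apply_lt' s t x ⟨(i0:ℕ)-1, lt_of_le_of_lt (Nat.sub_le _ _) i0.isLt⟩
            (show (i0:ℕ)-1 < 3*s by omega)
            (show ((i0:ℕ)-1)/3 < s by omega) (show ((i0:ℕ)-1)%3 < 3 by omega)]
          exact congrArg₂ psi
            (congrArg x.1 (Fin.ext (show ((i0:ℕ)-1)/3 = (i0:ℕ)/3 by omega)))
            (Fin.ext (show ((i0:ℕ)-1)%3 = (1:ℕ) by omega))
        · rw [if_neg (show ¬ (m:ℕ) = 3*((i0:ℕ)/3)+2 by omega),
            if_neg (show ¬ (m:ℕ) = 3*((i0:ℕ)/3) by omega)]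
          exact h4 m em2 em0
    · obtain ⟨h1, h4⟩ := vqpat_elim_flip _ _ i0 h3 hp
      rcases Nat.lt_or_ge (i0:ℕ) (3*s) with hlt | hge
      · by_cases h0 : (i0:ℕ) % 3 = 0
        · refine ⟨(aGen s t ⟨(i0:ℕ)/3, by omega⟩)^2,
            Or.inl ⟨⟨(i0:ℕ)/3, by omega⟩, Or.inl rfl⟩, hinj ?_⟩
          funext m
          rw [phi_a2]
          by_cases em : (m:ℕ) = (i0:ℕ)
          · rw [if_pos (show (m:ℕ) = 3*((i0:ℕ)/3) by omega),
              show m = (⟨(i0:ℕ), ha⟩ : Fin (3*s+t)) from Fin.ext em]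
            exact h1
          · rw [if_neg (show ¬ (m:ℕ) = 3*((i0:ℕ)/3) by omega)]
            exact h4 m em
        · refine ⟨bGen s t ⟨(i0:ℕ)/3, by omega⟩,
            Or.inl ⟨⟨(i0:ℕ)/3, by omega⟩, Or.inr (Or.inl rfl)⟩, hinj ?_⟩
          funext m
          rw [phi_b]
          by_cases em : (m:ℕ) = (i0:ℕ)
          · rw [if_pos (show (m:ℕ) = 3*((i0:ℕ)/3)+1 by omega),
              show m = (⟨(i0:ℕ), ha⟩ : Fin (3*s+t)) from Fin.ext em]
            exact h1
          · rw [if_neg (show ¬ (m:ℕ) = 3*((i0:ℕ)/3)+1 by omega)]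
            exact h4 m em
      · refine ⟨cGen s t ⟨(i0:ℕ)-3*s, by omega⟩,
          Or.inr ⟨⟨(i0:ℕ)-3*s, by omega⟩, rfl⟩, hinj ?_⟩
        funext m
        rw [phi_c]
        by_cases em : (m:ℕ) = (i0:ℕ)
        · rw [if_pos (show (m:ℕ) = 3*s+((i0:ℕ)-3*s) by omega),
            show m = (⟨(i0:ℕ), ha⟩ : Fin (3*s+t)) from Fin.ext em]
          exact h1
        · rw [if_neg (show ¬ (m:ℕ) = 3*s+((i0:ℕ)-3*s) by omega)]
          exact h4 m em

theorem cayley_iso_varietalCube (s t : ℕ) (ht : t ≤ 2) :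
    Nonempty (cayley (OmegaN s t) ≃g varietalCube (3 * s + t)) := by
  refine ⟨{ toEquiv := phiEquiv s t, map_rel_iff' := ?_ }⟩
  intro x y
  rw [vq_adj, cayley_adj]
  exact (main_equiv s t ht x y).symm
end

section
/- Let k ≥ 1, G = H_1 × ⋯ × H_k where H_i is dihedral of order 8 generated by a_i (order 4) and involution b_i with b_i a_i b_i = a_i^{-1}, and Ω = {a_i², b_i, a_i b_i : 1 ≤ i ≤ k}. In the Cayley graph Cay(G, Ω), for any fixed i, the vertices a_i b_i and b_i (both neighbors of the identity e) have exactly one common neighbor, namely e. (In particular, there is no element u ≠ e with u = x·(a_i b_i) = y·b_i for x, y ∈ Ω.) -/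
/-- The group `G = H_1 × ⋯ × H_k` with `H_i` dihedral of order 8. -/
abbrev GK (k : ℕ) := Fin k → DihedralGroup 4

def aK (k : ℕ) (i : Fin k) : GK k := Pi.mulSingle i (DihedralGroup.r 1)

def bK (k : ℕ) (i : Fin k) : GK k := Pi.mulSingle i (DihedralGroup.sr 0)

/-- The connection set `Ω = {a_i², b_i, a_i b_i : 1 ≤ i ≤ k}`. -/
def OmegaK (k : ℕ) : Set (GK k) :=
  {x | ∃ i, x = (aK k i) ^ 2 ∨ x = bK k i ∨ x = aK k i * bK k i}

open DihedralGroup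

lemma hab (k : ℕ) (i : Fin k) : aK k i * bK k i = Pi.mulSingle i (sr 3) := by
  rw [aK, bK, ← Pi.mulSingle_mul]
  exact congrArg _ (by decide)

lemma haa (k : ℕ) (i : Fin k) : (aK k i) ^ 2 = Pi.mulSingle i (r 2) := by
  rw [aK, sq, ← Pi.mulSingle_mul]
  exact congrArg _ (by decide)

lemma mem_omega {k : ℕ} {x : GK k} (hx : x ∈ OmegaK k) :
    ∃ j g, x = Pi.mulSingle j g ∧ (g = r 2 ∨ g = sr 0 ∨ g = sr 3) := by
  obtain ⟨j, h | h | h⟩ := hx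
  · exact ⟨j, r 2, by rw [h, haa], Or.inl rfl⟩
  · exact ⟨j, sr 0, h, Or.inr (Or.inl rfl)⟩
  · exact ⟨j, sr 3, by rw [h, hab], Or.inr (Or.inr rfl)⟩

lemma omega_invol {k : ℕ} {x : GK k} (hx : x ∈ OmegaK k) : x * x = 1 := by
  obtain ⟨j, g, rfl, hg⟩ := mem_omega hx
  rw [← Pi.mulSingle_mul]
  rcases hg with rfl | rfl | rfl <;>
    · rw [show (_ * _ : DihedralGroup 4) = 1 by decide, Pi.mulSingle_one]

lemma key (k : ℕ) (i : Fin k) (x y : GK k) (hx : x ∈ OmegaK k) (hy : y ∈ OmegaK k)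
    (heq : x * Pi.mulSingle i (sr 3) = y * Pi.mulSingle i (sr 0)) :
    x * Pi.mulSingle i (sr 3) = 1 := by
  obtain ⟨j, g, rfl, hg⟩ := mem_omega hx
  obtain ⟨l, h, rfl, hh⟩ := mem_omega hy
  have hi := congrFun heq i
  simp only [Pi.mul_apply, Pi.mulSingle_apply, eq_self_iff_true, if_true] at hi
  rcases eq_or_ne i j with hji | hji <;> rcases eq_or_ne i l with hli | hli
  · rw [if_pos hji, if_pos hli] at hi
    subst hji
    rcases hg with rfl | rfl | rfl <;> rcases hh with rfl | rfl | rfl <;>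
      first
        | exact absurd hi (by decide)
        | rw [← Pi.mulSingle_mul, show (sr 3 * sr 3 : DihedralGroup 4) = 1 from by decide,
            Pi.mulSingle_one]
  · rw [if_pos hji, if_neg hli, one_mul] at hi
    exfalso
    rcases hg with rfl | rfl | rfl <;> exact absurd hi (by decide)
  · rw [if_neg hji, if_pos hli, one_mul] at hi
    exfalso
    rcases hh with rfl | rfl | rfl <;> exact absurd hi (by decide)
  · rw [if_neg hji, if_neg hli, one_mul, one_mul] at hi
    exact absurd hi (by decide)

theorem common_neighbor_ab_b (k : ℕ) (hk : 1 ≤ k) (i : Fin k) :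
    {z | (cayley (OmegaK k)).Adj z (aK k i * bK k i) ∧ (cayley (OmegaK k)).Adj z (bK k i)} =
      {(1 : GK k)} ∧
    ∀ u x y : GK k, x ∈ OmegaK k → y ∈ OmegaK k →
      u = x * (aK k i * bK k i) → u = y * bK k i → u = 1 := by
  have hmemab : aK k i * bK k i ∈ OmegaK k := ⟨i, Or.inr (Or.inr rfl)⟩
  have hmemb : bK k i ∈ OmegaK k := ⟨i, Or.inr (Or.inl rfl)⟩
  have hkey : ∀ u x y : GK k, x ∈ OmegaK k → y ∈ OmegaK k →
      u = x * (aK k i * bK k i) → u = y * bK k i → u = 1 := by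
    intro u x y hx hy h1 h2
    rw [h1]
    rw [hab] at h1 ⊢
    rw [bK] at h2
    exact key k i x y hx hy (by rw [← h1, h2])
  refine ⟨?_, hkey⟩
  ext z
  simp only [Set.mem_setOf_eq, Set.mem_singleton_iff, cayley, SimpleGraph.fromRel_adj]
  constructor
  · rintro ⟨⟨_, h1⟩, ⟨_, h2⟩⟩
    have get : ∀ v w : GK k, ((∃ s ∈ OmegaK k, w = s * v) ∨ ∃ s ∈ OmegaK k, v = s * w) →
        ∃ s ∈ OmegaK k, v = s * w := by
      rintro v w (⟨s, hs, rfl⟩ | h)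
      · exact ⟨s, hs, by rw [← mul_assoc, omega_invol hs, one_mul]⟩
      · exact h
    obtain ⟨x, hx, hzx⟩ := get _ _ h1
    obtain ⟨y, hy, hzy⟩ := get _ _ h2
    exact hkey z x y hx hy hzx hzy
  · rintro rfl
    have hne1 : (1 : GK k) ≠ aK k i * bK k i := by
      rw [hab]
      intro h
      have h2 := congrFun h i
      simp only [Pi.one_apply, Pi.mulSingle_apply, if_pos rfl] at h2
      exact absurd h2 (by decide)
    have hne2 : (1 : GK k) ≠ bK k i := by
      rw [bK]
      intro h
      have h2 := congrFun h i
      simp only [Pi.one_apply, Pi.mulSingle_apply, if_pos rfl] at h2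
      exact absurd h2 (by decide)
    exact ⟨⟨hne1, Or.inl ⟨_, hmemab, (mul_one _).symm⟩⟩,
           ⟨hne2, Or.inl ⟨_, hmemb, (mul_one _).symm⟩⟩⟩
end

section
/- Let k ≥ 1 and G = H_1 × ⋯ × H_k with H_i dihedral of order 8 generated by a_i (order 4) and involution b_i inverting a_i. Set Ω = {a_i², b_i, a_i b_i : 1 ≤ i ≤ k}. Then every element of Ω is an involution, Ω generates G, and for any two distinct elements x, y ∈ Ω the product xy lies in the subgroup ⟨a_1², …, a_k²⟩ if and only if {x, y} ⊆ {a_1², …, a_k²}; in particular the product of two distinct elements of Ω \ {a_i² : i} never lies in ⟨a_i² : 1 ≤ i ≤ k⟩. -/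
open DihedralGroup

theorem Subgroup.closure_iUnion_image_mulSingle_eq_top {η : Type*} [Finite η]
    [DecidableEq η] {f : η → Type*} [∀ i, Group (f i)] {s : ∀ i, Set (f i)}
    (hs : ∀ i, closure (s i) = ⊤) :
    closure (⋃ i, Pi.mulSingle i '' s i) = ⊤ := by
  refine eq_top_iff.2 fun x _ => pi_mem_of_mulSingle_mem x fun i => ?_
  have hmap : map (MonoidHom.mulSingle f i) (closure (s i)) ≤
      closure (⋃ i, Pi.mulSingle i '' s i) := by
    rw [MonoidHom.map_closure]
    exact closure_mono (Set.subset_iUnion_of_subset i le_rfl)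
  exact hmap ⟨x i, by simp [hs i], rfl⟩

theorem DihedralGroup.closure_sr_zero_sr_neg_one (n : ℕ) :
    Subgroup.closure {sr 0, sr (-1)} = (⊤ : Subgroup (DihedralGroup n)) := by
  set H := Subgroup.closure {sr (0 : ZMod n), sr (-1)}
  have hsr : sr 0 ∈ H := Subgroup.subset_closure (by simp)
  have hr : ∀ m, r m ∈ H := by
    intro m
    obtain ⟨k, rfl⟩ := ZMod.intCast_surjective m
    rw [← r_one_zpow, ← show sr (-1) * sr 0 = (r 1 : DihedralGroup n) by simp [sr_mul_sr]]
    exact zpow_mem (mul_mem (Subgroup.subset_closure (by simp)) hsr) k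
  refine eq_top_iff.2 ?_
  rintro (m | m) -
  · exact hr m
  · rw [← zero_add m, ← sr_mul_r]
    exact mul_mem hsr (hr m)

def omegaFactor : Set (DihedralGroup 4) := {r 2, sr 0, sr 3}

theorem closure_omegaFactor : Subgroup.closure omegaFactor = ⊤ := by
  refine top_le_iff.1 ((closure_sr_zero_sr_neg_one 4).ge.trans (Subgroup.closure_mono ?_))
  rintro g (rfl | rfl)
  exacts [Or.inr (Or.inl rfl), Or.inr (Or.inr rfl)]

theorem mul_self_eq_one_and_ne_one_of_mem_omegaFactor :
    ∀ g ∈ omegaFactor, g * g = 1 ∧ g ≠ 1 := by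
  unfold omegaFactor; decide

theorem eq_r_two_of_mem_omegaFactor_of_mem_center :
    ∀ g ∈ omegaFactor, g ∈ Subgroup.center (DihedralGroup 4) → g = r 2 := by
  unfold omegaFactor; decide

theorem eq_r_two_of_mem_omegaFactor_of_mul_mem_center :
    ∀ g ∈ omegaFactor, ∀ h ∈ omegaFactor, g ≠ h →
      g * h ∈ Subgroup.center (DihedralGroup 4) → g = r 2 ∧ h = r 2 := by
  unfold omegaFactor; decide

section

variable {k : ℕ}

theorem aK_sq (i : Fin k) : aK k i ^ 2 = Pi.mulSingle i (r 2) := by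
  rw [aK, ← Pi.mulSingle_pow]
  rfl

theorem aK_mul_bK (i : Fin k) : aK k i * bK k i = Pi.mulSingle i (sr 3) := by
  rw [aK, bK, ← Pi.mulSingle_mul]
  rfl

theorem omegaK_eq_iUnion : OmegaK k = ⋃ i, Pi.mulSingle i '' omegaFactor := by
  ext x
  simp only [OmegaK, aK_sq, aK_mul_bK, Set.mem_ofPred_eq, Set.mem_iUnion, Set.mem_image,
    omegaFactor, Set.mem_insert_iff, Set.mem_singleton_iff, exists_eq_or_imp, exists_eq_left]
  exact exists_congr fun i => or_congr eq_comm (or_congr eq_comm eq_comm)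

theorem mem_omegaK_iff {x : GK k} :
    x ∈ OmegaK k ↔ ∃ i, ∃ g ∈ omegaFactor, Pi.mulSingle i g = x := by
  simp [omegaK_eq_iUnion]

theorem closure_aK_sq_le_center :
    Subgroup.closure {z : GK k | ∃ i, z = aK k i ^ 2} ≤ Subgroup.center (GK k) := by
  rw [Subgroup.closure_le, Subgroup.center_pi]
  rintro z ⟨i, rfl⟩
  rw [aK_sq]
  exact (Subgroup.mulSingle_mem_pi i _).2 fun _ => by decide

theorem eq_r_two_of_mulSingle_mul_mulSingle_mem_center {i j : Fin k}
    {g h : DihedralGroup 4} (hg : g ∈ omegaFactor) (hh : h ∈ omegaFactor)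
    (hne : (Pi.mulSingle i g : GK k) ≠ Pi.mulSingle j h)
    (hc : (Pi.mulSingle i g * Pi.mulSingle j h : GK k) ∈ Subgroup.center (GK k)) :
    g = r 2 ∧ h = r 2 := by
  rw [Subgroup.center_pi, Subgroup.mem_pi] at hc
  by_cases hij : i = j
  · subst hij
    have hgh := hc i trivial
    rw [← Pi.mulSingle_mul, Pi.mulSingle_eq_same] at hgh
    exact eq_r_two_of_mem_omegaFactor_of_mul_mem_center g hg h hh (fun e => hne (congrArg _ e)) hgh
  · have hgi := hc i trivial
    have hhj := hc j trivial
    rw [Pi.mul_apply, Pi.mulSingle_eq_same, Pi.mulSingle_eq_of_ne hij, mul_one] at hgi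
    rw [Pi.mul_apply, Pi.mulSingle_eq_same, Pi.mulSingle_eq_of_ne (Ne.symm hij), one_mul] at hhj
    exact ⟨eq_r_two_of_mem_omegaFactor_of_mem_center g hg hgi,
      eq_r_two_of_mem_omegaFactor_of_mem_center h hh hhj⟩

end

theorem omega_involutions_generate_general (k : ℕ) :
    (∀ x ∈ OmegaK k, x * x = 1 ∧ x ≠ 1) ∧
    Subgroup.closure (OmegaK k) = ⊤ ∧
    (∀ x ∈ OmegaK k, ∀ y ∈ OmegaK k, x ≠ y →
      (x * y ∈ Subgroup.closure {z : GK k | ∃ i, z = (aK k i) ^ 2} ↔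
        ((∃ i, x = (aK k i) ^ 2) ∧ ∃ i, y = (aK k i) ^ 2))) := by
  refine ⟨?_, ?_, ?_⟩
  · intro x hx
    obtain ⟨i, g, hg, rfl⟩ := mem_omegaK_iff.1 hx
    obtain ⟨hgg, hg1⟩ := mul_self_eq_one_and_ne_one_of_mem_omegaFactor g hg
    rw [← Pi.mulSingle_mul, hgg, Pi.mulSingle_one, Ne, Pi.mulSingle_eq_one_iff]
    exact ⟨rfl, hg1⟩
  · rw [omegaK_eq_iUnion]
    exact Subgroup.closure_iUnion_image_mulSingle_eq_top fun _ => closure_omegaFactor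
  · intro x hx y hy hxy
    refine ⟨fun hmem => ?_, fun ⟨⟨i, hi⟩, ⟨j, hj⟩⟩ =>
      mul_mem (Subgroup.subset_closure ⟨i, hi⟩) (Subgroup.subset_closure ⟨j, hj⟩)⟩
    obtain ⟨i, g, hg, rfl⟩ := mem_omegaK_iff.1 hx
    obtain ⟨j, h, hh, rfl⟩ := mem_omegaK_iff.1 hy
    obtain ⟨rfl, rfl⟩ :=
      eq_r_two_of_mulSingle_mul_mulSingle_mem_center hg hh hxy (closure_aK_sq_le_center hmem)
    exact ⟨⟨i, (aK_sq i).symm⟩, ⟨j, (aK_sq j).symm⟩⟩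

theorem omega_involutions_generate (k : ℕ) (hk : 1 ≤ k) :
    (∀ x ∈ OmegaK k, x * x = 1 ∧ x ≠ 1) ∧
    Subgroup.closure (OmegaK k) = ⊤ ∧
    (∀ x ∈ OmegaK k, ∀ y ∈ OmegaK k, x ≠ y →
      (x * y ∈ Subgroup.closure {z : GK k | ∃ i, z = (aK k i) ^ 2} ↔
        ((∃ i, x = (aK k i) ^ 2) ∧ ∃ i, y = (aK k i) ^ 2))) :=
  omega_involutions_generate_general k
end
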